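/- There is no 3-dimensional torsionless left Λ-module with simple socle. Precisely: if M is a left Λ-module with dim_k M = 3 which admits an injective Λ-linear map into a finite free module Λⁿ, then the submodule {m ∈ M : x·m = y·m = z·m = 0} (which is the socle of M, since x, y, z generate rad Λ and every simple Λ-module is isomorphic to k) has k-dimension at least 2. -/

import Mathlib

open CategoryTheory Limits Opposite

/-- The algebra `Λ = Λ(q)` of Ringel–Zhang: a `k`-algebra with distinguished elements
`x, y, z` satisfying the defining relations
`x² = y² = z² = 0`, `yz = 0`, `xy + q·yx = 0`, `xz = zx`, `zy = zx`,
and admitting the `k`-basis `{1, x, y, z, yx, zx}`.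
Any such algebra is canonically isomorphic to the quotient of the free algebra
`k⟨x,y,z⟩` by the two-sided ideal generated by these relations. -/
structure LambdaAlg (k : Type) [Field k] (q : k) (Λ : Type) [Ring Λ] [Algebra k Λ] :
    Type where
  x : Λ
  y : Λ
  z : Λ
  hxx : x * x = 0
  hyy : y * y = 0
  hzz : z * z = 0
  hyz : y * z = 0
  hxy : x * y + q • (y * x) = 0
  hxz : x * z - z * x = 0
  hzy : z * y - z * x = 0
  basis : Module.Basis (Fin 6) k Λ
  hb0 : basis 0 = 1
  hb1 : basis 1 = x
  hb2 : basis 2 = y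
  hb3 : basis 3 = z
  hb4 : basis 4 = y * x
  hb5 : basis 5 = z * x

namespace LambdaAlg

variable {k : Type} [Field k] {q : k} {Λ : Type} [Ring Λ] [Algebra k Λ]

/-- The element `ax + by + cz` of `Λ`. -/
def w (D : LambdaAlg k q Λ) (a b c : k) : Λ := a • D.x + b • D.y + c • D.z

/-- The left ideal `U(a,b,c) = Λ(ax+by+cz) + Λ·yx + Λ·zx` of `Λ`. -/
def U (D : LambdaAlg k q Λ) (a b c : k) : Submodule Λ Λ :=
  Submodule.span Λ {D.w a b c, D.y * D.x, D.z * D.x}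

/-- The left `Λ`-module `M(a,b,c) = Λ/U(a,b,c)`. -/
abbrev M (D : LambdaAlg k q Λ) (a b c : k) : Type := Λ ⧸ D.U a b c

/-- The right ideal `U′(a,b,c) = (ax+by+cz)Λ + yx·Λ + zx·Λ` of `Λ`,
viewed as a `Λᵐᵒᵖ`-submodule of `Λ`. -/
def U' (D : LambdaAlg k q Λ) (a b c : k) : Submodule Λᵐᵒᵖ Λ :=
  Submodule.span Λᵐᵒᵖ {D.w a b c, D.y * D.x, D.z * D.x}

/-- The right `Λ`-module `M′(a,b,c) = Λ/U′(a,b,c)` (a module over `Λᵐᵒᵖ`). -/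
abbrev M' (D : LambdaAlg k q Λ) (a b c : k) : Type := Λ ⧸ D.U' a b c

/-- The `k`-subspace `{m ∈ M : x·m = y·m = z·m = 0}` of a left `Λ`-module `M`;
since `x, y, z` generate `rad Λ` and every simple `Λ`-module is isomorphic to `k`,
this is the socle of `M`. -/
def ann (D : LambdaAlg k q Λ) (M : Type) [AddCommGroup M] [Module k M] [Module Λ M]
    [IsScalarTower k Λ M] : Submodule k M where
  carrier := {m | D.x • m = 0 ∧ D.y • m = 0 ∧ D.z • m = 0}
  add_mem' := by
    rintro a b ⟨h1, h2, h3⟩ ⟨g1, g2, g3⟩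
    simp [smul_add, h1, h2, h3, g1, g2, g3]
  zero_mem' := by simp
  smul_mem' := by
    rintro a m ⟨h1, h2, h3⟩
    refine ⟨?_, ?_, ?_⟩ <;> rw [smul_comm] <;> simp [h1, h2, h3]

/-- The submodule `(rad Λ)·M = x·M + y·M + z·M` of a left `Λ`-module `M`. -/
def radM (D : LambdaAlg k q Λ) (M : Type) [AddCommGroup M] [Module Λ M] :
    Submodule Λ M :=
  Submodule.span Λ
    (Set.range (fun m : M => D.x • m) ∪ Set.range (fun m : M => D.y • m) ∪
      Set.range (fun m : M => D.z • m))

end LambdaAlg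

/-- A module is indecomposable if it is nonzero and is not the direct sum of two
nonzero submodules. -/
def IsIndecomposable (R : Type) [Ring R] (M : Type) [AddCommGroup M] [Module R M] :
    Prop :=
  Nontrivial M ∧
    ∀ N₁ N₂ : Submodule R M, N₁ ⊓ N₂ = ⊥ → N₁ ⊔ N₂ = ⊤ → N₁ = ⊥ ∨ N₂ = ⊥

/-- A module is torsionless if it admits an injective linear map into a finite free
module. -/
def IsTorsionless (R : Type) [Ring R] (M : Type) [AddCommGroup M] [Module R M] : Prop :=
  ∃ (n : ℕ) (f : M →ₗ[R] (Fin n → R)), Function.Injective f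

/-- The canonical evaluation map `M → M** = Hom_{Λᵒᵖ}(Hom_Λ(M, Λ), Λ)`,
sending `m` to `f ↦ f m`. -/
def evalMap (Λ : Type) [Ring Λ] (M : Type) [AddCommGroup M] [Module Λ M] :
    M → ((M →ₗ[Λ] Λ) →ₗ[Λᵐᵒᵖ] Λ) := fun m =>
  { toFun := fun f => f m
    map_add' := fun _ _ => rfl
    map_smul' := fun _ _ => rfl }

/-- The transformation `ω′(a,b,c) = (a, q⁻¹b, −((a+q⁻¹b)/a)·c)` on triples. -/
def omegaPrime {k : Type} [Field k] (q : k) (t : k × k × k) : k × k × k :=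
  (t.1, q⁻¹ * t.2.1, -((t.1 + q⁻¹ * t.2.1) / t.1) * t.2.2)

/-!
If `yx` does not annihilate `M`, pick `m` with `yx·m ≠ 0`; some coordinate of the embedding
`f : M → Λⁿ` has nonzero constant term at `m`, so `yx·m` and `zx·m` stay independent, and both
lie in the socle.

Otherwise `f(M) ⊆ (rad Λ)ⁿ`, so `x·M`, `y·M`, `z·M` all lie in the socle `S`. If `S` were at most a
line `k·s`, reading off the `yx`-coordinates of `f(s)` shows that either `z` kills `M` and
`x = q·y` on `M`, or `y` and `z` both kill `M`. Either way `S` is the kernel of a single operator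
`T ∈ {x, y}` whose range also lies in `S`, so `3 = dim M ≤ 2 dim S`, a contradiction.
-/

lemma finrank_le_add_of_ker_le_of_range_le {k V W : Type} [Field k] [AddCommGroup V]
    [Module k V] [AddCommGroup W] [Module k W] [FiniteDimensional k V] {T : V →ₗ[k] W}
    {S : Submodule k V} {S' : Submodule k W} [FiniteDimensional k S'] (hker : LinearMap.ker T ≤ S)
    (hrange : LinearMap.range T ≤ S') :
    Module.finrank k V ≤ Module.finrank k S + Module.finrank k S' := by
  have := T.finrank_range_add_finrank_ker
  have := Submodule.finrank_mono hker
  have := Submodule.finrank_mono hrange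
  omega

lemma two_le_finrank_of_linearIndependent_pair {k V : Type} [Field k] [AddCommGroup V]
    [Module k V] [FiniteDimensional k V] {S : Submodule k V} {u v : V} (hu : u ∈ S) (hv : v ∈ S)
    (huv : LinearIndependent k ![u, v]) : 2 ≤ Module.finrank k S :=
  calc 2 = Module.finrank k (Submodule.span k (Set.range ![u, v])) := by
        rw [finrank_span_eq_card huv, Fintype.card_fin]
    _ ≤ Module.finrank k S :=
        Submodule.finrank_mono (Submodule.span_le.mpr
          (Set.range_subset_iff.mpr (Fin.forall_fin_two.mpr ⟨hu, hv⟩)))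

lemma Module.Basis.repr_apply_map_smul {k Λ M ι : Type} [Field k] [Ring Λ] [Algebra k Λ]
    [AddCommGroup M] [Module k M] [Module Λ M] [IsScalarTower k Λ M] {n : ℕ}
    (b : Module.Basis ι k Λ) (f : M →ₗ[Λ] (Fin n → Λ)) (c : k) (m : M) (j : Fin n) (i : ι) :
    b.repr (f (c • m) j) i = c * b.repr (f m j) i := by
  rw [LinearMap.map_smul_of_tower, Pi.smul_apply, map_smul, Finsupp.smul_apply, smul_eq_mul]

lemma LinearMap.map_smul_apply_eq_mul {R M : Type} [Ring R] [AddCommGroup M] [Module R M]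
    {n : ℕ} (f : M →ₗ[R] (Fin n → R)) (a : R) (m : M) (j : Fin n) : f (a • m) j = a * f m j := by
  rw [map_smul]; rfl

namespace LambdaAlg

variable {k : Type} [Field k] {q : k} {Λ : Type} [Ring Λ] [Algebra k Λ] (D : LambdaAlg k q Λ)

lemma x_mul_y : D.x * D.y = -(q • (D.y * D.x)) := eq_neg_of_add_eq_zero_left D.hxy

lemma x_mul_z : D.x * D.z = D.z * D.x := sub_eq_zero.mp D.hxz

lemma z_mul_y : D.z * D.y = D.z * D.x := sub_eq_zero.mp D.hzy

lemma x_mul_yx : D.x * (D.y * D.x) = 0 := by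
  rw [← mul_assoc, D.x_mul_y, neg_mul, smul_mul_assoc, mul_assoc, D.hxx, mul_zero, smul_zero,
    neg_zero]

lemma x_mul_zx : D.x * (D.z * D.x) = 0 := by
  rw [← mul_assoc, D.x_mul_z, mul_assoc, D.hxx, mul_zero]

lemma y_mul_yx : D.y * (D.y * D.x) = 0 := by
  rw [← mul_assoc, D.hyy, zero_mul]

lemma y_mul_zx : D.y * (D.z * D.x) = 0 := by
  rw [← mul_assoc, D.hyz, zero_mul]

lemma z_mul_yx : D.z * (D.y * D.x) = 0 := by
  rw [← mul_assoc, D.z_mul_y, mul_assoc, D.hxx, mul_zero]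

lemma z_mul_zx : D.z * (D.z * D.x) = 0 := by
  rw [← mul_assoc, D.hzz, zero_mul]

lemma yx_mul_x : D.y * D.x * D.x = 0 := by
  rw [mul_assoc, D.hxx, mul_zero]

lemma yx_mul_y : D.y * D.x * D.y = 0 := by
  rw [mul_assoc, D.x_mul_y, mul_neg, mul_smul_comm, ← mul_assoc, D.hyy, zero_mul, smul_zero,
    neg_zero]

lemma yx_mul_z : D.y * D.x * D.z = 0 := by
  rw [mul_assoc, D.x_mul_z, ← mul_assoc, D.hyz, zero_mul]

lemma zx_mul_x : D.z * D.x * D.x = 0 := by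
  rw [mul_assoc, D.hxx, mul_zero]

lemma zx_mul_y : D.z * D.x * D.y = 0 := by
  rw [mul_assoc, D.x_mul_y, mul_neg, mul_smul_comm, ← mul_assoc, D.z_mul_y, mul_assoc, D.hxx,
    mul_zero, smul_zero, neg_zero]

lemma zx_mul_z : D.z * D.x * D.z = 0 := by
  rw [mul_assoc, D.x_mul_z, ← mul_assoc, D.hzz, zero_mul]

lemma eq_sum_basis (u : Λ) :
    u = D.basis.repr u 0 • (1 : Λ) + D.basis.repr u 1 • D.x + D.basis.repr u 2 • D.y
      + D.basis.repr u 3 • D.z + D.basis.repr u 4 • (D.y * D.x)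
      + D.basis.repr u 5 • (D.z * D.x) := by
  have h := D.basis.sum_repr u
  rw [Fin.sum_univ_six, D.hb0, D.hb1, D.hb2, D.hb3, D.hb4, D.hb5] at h
  exact h.symm

lemma x_mul (u : Λ) :
    D.x * u = D.basis.repr u 0 • D.x + (-(q * D.basis.repr u 2)) • (D.y * D.x)
      + D.basis.repr u 3 • (D.z * D.x) := by
  conv_lhs => rw [D.eq_sum_basis u]
  simp only [mul_add, mul_smul_comm, mul_one, D.hxx, D.x_mul_y, D.x_mul_z, D.x_mul_yx,
    D.x_mul_zx]
  module

lemma y_mul (u : Λ) : D.y * u = D.basis.repr u 0 • D.y + D.basis.repr u 1 • (D.y * D.x) := by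
  conv_lhs => rw [D.eq_sum_basis u]
  simp only [mul_add, mul_smul_comm, mul_one, D.hyy, D.hyz, D.y_mul_yx, D.y_mul_zx]
  module

lemma z_mul (u : Λ) :
    D.z * u = D.basis.repr u 0 • D.z + (D.basis.repr u 1 + D.basis.repr u 2) • (D.z * D.x) := by
  conv_lhs => rw [D.eq_sum_basis u]
  simp only [mul_add, mul_smul_comm, mul_one, D.hzz, D.z_mul_y, D.z_mul_yx, D.z_mul_zx]
  module

lemma yx_mul (u : Λ) : D.y * D.x * u = D.basis.repr u 0 • (D.y * D.x) := by
  conv_lhs => rw [D.eq_sum_basis u]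
  simp only [mul_add, mul_smul_comm, mul_one, ← mul_assoc, D.yx_mul_x, D.yx_mul_y, D.yx_mul_z,
    zero_mul]
  module

lemma zx_mul (u : Λ) : D.z * D.x * u = D.basis.repr u 0 • (D.z * D.x) := by
  conv_lhs => rw [D.eq_sum_basis u]
  simp only [mul_add, mul_smul_comm, mul_one, ← mul_assoc, D.zx_mul_x, D.zx_mul_y, D.zx_mul_z,
    zero_mul]
  module

lemma repr_x : D.basis.repr D.x = Finsupp.single 1 1 := by rw [← D.hb1, Module.Basis.repr_self]

lemma repr_y : D.basis.repr D.y = Finsupp.single 2 1 := by rw [← D.hb2, Module.Basis.repr_self]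

lemma repr_z : D.basis.repr D.z = Finsupp.single 3 1 := by rw [← D.hb3, Module.Basis.repr_self]

lemma repr_yx : D.basis.repr (D.y * D.x) = Finsupp.single 4 1 := by
  rw [← D.hb4, Module.Basis.repr_self]

lemma repr_zx : D.basis.repr (D.z * D.x) = Finsupp.single 5 1 := by
  rw [← D.hb5, Module.Basis.repr_self]

section Coordinates

variable (u : Λ)

lemma repr_x_mul_one : D.basis.repr (D.x * u) 1 = D.basis.repr u 0 := by
  rw [x_mul]; simp [repr_x, repr_yx, repr_zx]

lemma repr_x_mul_four : D.basis.repr (D.x * u) 4 = -(q * D.basis.repr u 2) := by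
  rw [x_mul]; simp [repr_x, repr_yx, repr_zx]

lemma repr_x_mul_five : D.basis.repr (D.x * u) 5 = D.basis.repr u 3 := by
  rw [x_mul]; simp [repr_x, repr_yx, repr_zx]

lemma repr_y_mul_four : D.basis.repr (D.y * u) 4 = D.basis.repr u 1 := by
  rw [y_mul]; simp [repr_y, repr_yx]

lemma repr_y_mul_five : D.basis.repr (D.y * u) 5 = 0 := by
  rw [y_mul]; simp [repr_y, repr_yx]

lemma repr_z_mul_four : D.basis.repr (D.z * u) 4 = 0 := by
  rw [z_mul]; simp [repr_z, repr_zx]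

lemma repr_z_mul_five : D.basis.repr (D.z * u) 5 = D.basis.repr u 1 + D.basis.repr u 2 := by
  rw [z_mul]; simp [repr_z, repr_zx]

end Coordinates

lemma linearIndependent_yx_zx : LinearIndependent k ![D.y * D.x, D.z * D.x] := by
  have h := D.basis.linearIndependent.comp ![4, 5] (by decide)
  rwa [show D.basis ∘ ![4, 5] = ![D.y * D.x, D.z * D.x] by
    ext i; fin_cases i <;> simp [D.hb4, D.hb5]] at h

lemma eq_of_x_mul_eq_zero_of_y_mul_eq_zero (hq : q ≠ 0) {u : Λ} (hx : D.x * u = 0)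
    (hy : D.y * u = 0) : u = D.basis.repr u 4 • (D.y * D.x) + D.basis.repr u 5 • (D.z * D.x) := by
  have h0 := D.repr_x_mul_one u
  have h1 := D.repr_y_mul_four u
  have h2 := D.repr_x_mul_four u
  have h3 := D.repr_x_mul_five u
  simp only [hx, hy, map_zero, Finsupp.coe_zero, Pi.zero_apply] at h0 h1 h2 h3
  have h2' : D.basis.repr u 2 = 0 := by simpa [hq] using h2
  conv_lhs => rw [D.eq_sum_basis u, ← h0, ← h1, h2', ← h3]
  simp

open LinearMap (map_smul_apply_eq_mul)

variable {D} {M : Type} [AddCommGroup M] [Module Λ M] {n : ℕ} {f : M →ₗ[Λ] (Fin n → Λ)}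

lemma repr_zero_eq_zero_of_yx_smul_eq_zero (hrad : ∀ m : M, (D.y * D.x) • m = 0) (m : M)
    (j : Fin n) : D.basis.repr (f m j) 0 = 0 := by
  have h := congr_fun (congr_arg f (hrad m)) j
  rw [map_smul_apply_eq_mul, D.yx_mul, f.map_zero, Pi.zero_apply] at h
  exact (smul_eq_zero.mp h).resolve_right (D.hb4 ▸ D.basis.ne_zero 4)

lemma zx_smul_eq_zero_of_yx_smul_eq_zero (hf : Function.Injective f)
    (hrad : ∀ m : M, (D.y * D.x) • m = 0) (m : M) : (D.z * D.x) • m = 0 :=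
  hf (funext fun j => by
    rw [map_smul_apply_eq_mul, D.zx_mul, repr_zero_eq_zero_of_yx_smul_eq_zero hrad, zero_smul,
      f.map_zero, Pi.zero_apply])

variable [Module k M] [IsScalarTower k Λ M]

variable (D) in
lemma yx_smul_mem_ann (m : M) : (D.y * D.x) • m ∈ D.ann M := by
  refine ⟨?_, ?_, ?_⟩ <;> rw [smul_smul]
  · rw [D.x_mul_yx, zero_smul]
  · rw [D.y_mul_yx, zero_smul]
  · rw [D.z_mul_yx, zero_smul]

variable (D) in
lemma zx_smul_mem_ann (m : M) : (D.z * D.x) • m ∈ D.ann M := by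
  refine ⟨?_, ?_, ?_⟩ <;> rw [smul_smul]
  · rw [D.x_mul_zx, zero_smul]
  · rw [D.y_mul_zx, zero_smul]
  · rw [D.z_mul_zx, zero_smul]

lemma linearIndependent_yx_smul_zx_smul (hf : Function.Injective f) {m : M}
    (hm : (D.y * D.x) • m ≠ 0) : LinearIndependent k ![(D.y * D.x) • m, (D.z * D.x) • m] := by
  obtain ⟨j, hj⟩ : ∃ j, D.basis.repr (f m j) 0 ≠ 0 := by
    by_contra! h
    refine hm (hf ?_)
    ext1 j
    rw [map_smul, map_zero, Pi.smul_apply, smul_eq_mul, D.yx_mul, h j, zero_smul, Pi.zero_apply]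
  rw [LinearIndependent.pair_iff]
  intro a b hab
  have hfj := congr_fun (congr_arg f hab) j
  simp only [map_add, LinearMap.map_smul_of_tower, map_smul, map_zero, Pi.add_apply,
    Pi.smul_apply, Pi.zero_apply, smul_eq_mul, D.yx_mul, D.zx_mul, smul_smul] at hfj
  obtain ⟨ha, hb⟩ := LinearIndependent.pair_iff.mp D.linearIndependent_yx_zx _ _ hfj
  exact ⟨(mul_eq_zero.mp ha).resolve_right hj, (mul_eq_zero.mp hb).resolve_right hj⟩

lemma eq_zero_of_mem_ann (hq : q ≠ 0) (hf : Function.Injective f) {t : M} (ht : t ∈ D.ann M)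
    (h4 : ∀ j, D.basis.repr (f t j) 4 = 0) (h5 : ∀ j, D.basis.repr (f t j) 5 = 0) : t = 0 := by
  obtain ⟨hx, hy, -⟩ := ht
  refine hf (funext fun j => ?_)
  have hx' : D.x * f t j = 0 := by rw [← map_smul_apply_eq_mul, hx, f.map_zero, Pi.zero_apply]
  have hy' : D.y * f t j = 0 := by rw [← map_smul_apply_eq_mul, hy, f.map_zero, Pi.zero_apply]
  rw [D.eq_of_x_mul_eq_zero_of_y_mul_eq_zero hq hx' hy', h4, h5, zero_smul, zero_smul, add_zero,
    f.map_zero, Pi.zero_apply]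

lemma x_smul_mem_ann_of_yx_smul_eq_zero (hf : Function.Injective f)
    (hrad : ∀ m : M, (D.y * D.x) • m = 0) (m : M) : D.x • m ∈ D.ann M := by
  refine ⟨?_, ?_, ?_⟩ <;> rw [smul_smul]
  · rw [D.hxx, zero_smul]
  · exact hrad m
  · exact zx_smul_eq_zero_of_yx_smul_eq_zero hf hrad m

lemma y_smul_mem_ann_of_yx_smul_eq_zero (hf : Function.Injective f)
    (hrad : ∀ m : M, (D.y * D.x) • m = 0) (m : M) : D.y • m ∈ D.ann M := by
  refine ⟨?_, ?_, ?_⟩ <;> rw [smul_smul]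
  · rw [D.x_mul_y, neg_smul, smul_assoc, hrad m, smul_zero, neg_zero]
  · rw [D.hyy, zero_smul]
  · rw [D.z_mul_y]; exact zx_smul_eq_zero_of_yx_smul_eq_zero hf hrad m

lemma z_smul_mem_ann_of_yx_smul_eq_zero (hf : Function.Injective f)
    (hrad : ∀ m : M, (D.y * D.x) • m = 0) (m : M) : D.z • m ∈ D.ann M := by
  refine ⟨?_, ?_, ?_⟩ <;> rw [smul_smul]
  · rw [D.x_mul_z]; exact zx_smul_eq_zero_of_yx_smul_eq_zero hf hrad m
  · rw [D.hyz, zero_smul]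
  · rw [D.hzz, zero_smul]

variable {s : M}

lemma ker_lsmul_y_le_ann (hf : Function.Injective f)
    (hrad : ∀ m : M, (D.y * D.x) • m = 0) (hs : D.ann M ≤ k ∙ s) {j₀ : Fin n}
    (hj₀ : D.basis.repr (f s j₀) 4 ≠ 0) : LinearMap.ker (Algebra.lsmul k k M D.y) ≤ D.ann M := by
  have eq_zero {t : M} (ht : t ∈ D.ann M) (h : D.basis.repr (f t j₀) 4 = 0) : t = 0 := by
    obtain ⟨c, rfl⟩ := Submodule.mem_span_singleton.mp (hs ht)
    rw [D.basis.repr_apply_map_smul] at h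
    rw [(mul_eq_zero.mp h).resolve_right hj₀, zero_smul]
  have hz (m : M) : D.z • m = 0 :=
    eq_zero (z_smul_mem_ann_of_yx_smul_eq_zero hf hrad m)
      (by rw [map_smul_apply_eq_mul, D.repr_z_mul_four])
  have hx (m : M) : D.x • m = q • D.y • m := by
    refine sub_eq_zero.mp (eq_zero (sub_mem (x_smul_mem_ann_of_yx_smul_eq_zero hf hrad m)
      (Submodule.smul_mem _ q (y_smul_mem_ann_of_yx_smul_eq_zero hf hrad m))) ?_)
    have h5 := congr_arg (fun t => D.basis.repr (f t j₀) 5) (hz m)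
    simp only [map_smul_apply_eq_mul, D.repr_z_mul_five, f.map_zero, Pi.zero_apply,
      map_zero, Finsupp.coe_zero] at h5
    rw [map_sub, Pi.sub_apply, map_sub, Finsupp.sub_apply, D.basis.repr_apply_map_smul,
      map_smul_apply_eq_mul, map_smul_apply_eq_mul, D.repr_x_mul_four, D.repr_y_mul_four]
    linear_combination (-q) * h5
  intro m hm
  have hy : D.y • m = 0 := hm
  exact ⟨by rw [hx, hy, smul_zero], hy, hz m⟩

lemma ker_lsmul_x_le_ann (hq : q ≠ 0) (hf : Function.Injective f)
    (hrad : ∀ m : M, (D.y * D.x) • m = 0) (hs : D.ann M ≤ k ∙ s)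
    (hs₄ : ∀ j, D.basis.repr (f s j) 4 = 0) : LinearMap.ker (Algebra.lsmul k k M D.x) ≤ D.ann M := by
  have repr_four {t : M} (ht : t ∈ D.ann M) (j : Fin n) : D.basis.repr (f t j) 4 = 0 := by
    obtain ⟨c, rfl⟩ := Submodule.mem_span_singleton.mp (hs ht)
    rw [D.basis.repr_apply_map_smul, hs₄, mul_zero]
  have hy (m : M) : D.y • m = 0 := by
    have hm := y_smul_mem_ann_of_yx_smul_eq_zero hf hrad m
    exact eq_zero_of_mem_ann hq hf hm (repr_four hm)
      (fun j => by rw [map_smul_apply_eq_mul, D.repr_y_mul_five])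
  have hz (m : M) : D.z • m = 0 := by
    have hm := z_smul_mem_ann_of_yx_smul_eq_zero hf hrad m
    refine eq_zero_of_mem_ann hq hf hm (repr_four hm) (fun j => ?_)
    have h1 := congr_arg (fun t => D.basis.repr (f t j) 4) (hy m)
    have h2 := repr_four (x_smul_mem_ann_of_yx_smul_eq_zero hf hrad m) j
    simp only [map_smul_apply_eq_mul, D.repr_y_mul_four, D.repr_x_mul_four, f.map_zero,
      Pi.zero_apply, map_zero, Finsupp.coe_zero, neg_eq_zero, mul_eq_zero, hq, false_or] at h1 h2
    rw [map_smul_apply_eq_mul, D.repr_z_mul_five, h1, h2, add_zero]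
  exact fun m hm => ⟨hm, hy m, hz m⟩

lemma finrank_le_two_mul_finrank_ann [FiniteDimensional k M] (hq : q ≠ 0)
    (hf : Function.Injective f) (hrad : ∀ m : M, (D.y * D.x) • m = 0) (hs : D.ann M ≤ k ∙ s) :
    Module.finrank k M ≤ 2 * Module.finrank k (D.ann M) := by
  have range_le {a : Λ} (ha : ∀ m : M, a • m ∈ D.ann M) :
      LinearMap.range (Algebra.lsmul k k M a) ≤ D.ann M := by
    rintro _ ⟨m, rfl⟩
    exact ha m
  by_cases hs₄ : ∃ j, D.basis.repr (f s j) 4 ≠ 0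
  · obtain ⟨j₀, hj₀⟩ := hs₄
    have := finrank_le_add_of_ker_le_of_range_le (ker_lsmul_y_le_ann hf hrad hs hj₀)
      (range_le (y_smul_mem_ann_of_yx_smul_eq_zero hf hrad))
    omega
  · push Not at hs₄
    have := finrank_le_add_of_ker_le_of_range_le (ker_lsmul_x_le_ann hq hf hrad hs hs₄)
      (range_le (x_smul_mem_ann_of_yx_smul_eq_zero hf hrad))
    omega

end LambdaAlg

/-- There is no 3-dimensional torsionless left `Λ`-module with simple socle: the
socle `{m : x·m = y·m = z·m = 0}` of a 3-dimensional torsionless module has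
`k`-dimension at least 2. -/
theorem statement3 (k : Type) [Field k] (q : k) (hq : q ≠ 0)
    (Λ : Type) [Ring Λ] [Algebra k Λ] (D : LambdaAlg k q Λ)
    (M : Type) [AddCommGroup M] [Module k M] [Module Λ M] [IsScalarTower k Λ M]
    (hdim : Module.finrank k M = 3) (htor : IsTorsionless Λ M) :
    2 ≤ Module.finrank k ↥(D.ann M) := by
  obtain ⟨n, f, hf⟩ := htor
  have : FiniteDimensional k M := Module.finite_of_finrank_pos (by omega)
  by_cases hrad : ∀ m : M, (D.y * D.x) • m = 0
  · by_contra! hann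
    have : (D.ann M).IsPrincipal := (Submodule.finrank_le_one_iff_isPrincipal _).mp (by omega)
    have := D.finrank_le_two_mul_finrank_ann hq hf hrad
      (Submodule.IsPrincipal.span_singleton_generator (D.ann M)).ge
    omega
  · push Not at hrad
    obtain ⟨m, hm⟩ := hrad
    exact two_le_finrank_of_linearIndependent_pair (D.yx_smul_mem_ann m) (D.zx_smul_mem_ann m)
      (LambdaAlg.linearIndependent_yx_smul_zx_smul hf hm)
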